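/- arXiv:2401.15911 — 2 statements merged into one kernel-verified Lean document; each statement's English description precedes it below -/
import Mathlib

section
/- Let U, T be random variables on a discrete probability space with T binary (0/1), and let Y(t) be a random variable such that Y(t) is conditionally independent of T given U (i.e., P(T=1 | Y(t)=y, U=u) = P(T=1 | U=u) for all y, u with positive probability). Define the propensity e(U) = P(T=1 | U). Then T is conditionally independent of Y(t) given e(U): P(T=1 | Y(t)=y, e(U)=p) = p for all y, p with positive probability. -/
open scoped Classical
noncomputable section

variable {Ω : Type*} [Fintype Ω]

/-- Probability of an event under a weight function `p`. -/
def Pr (p : Ω → ℝ) (A : Set Ω) : ℝ := ∑ ω, if ω ∈ A then p ω else 0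

/-- Conditional probability `P(A | B)`. -/
def cPr (p : Ω → ℝ) (A B : Set Ω) : ℝ := Pr p (A ∩ B) / Pr p B

/-- Expectation. -/
def Ex (p : Ω → ℝ) (Y : Ω → ℝ) : ℝ := ∑ ω, p ω * Y ω

/-- Conditional expectation given an event. -/
def cEx (p : Ω → ℝ) (Y : Ω → ℝ) (A : Set Ω) : ℝ :=
  (∑ ω, if ω ∈ A then p ω * Y ω else 0) / Pr p A

/-- `p` is a probability mass function on `Ω`. -/
def IsProb (p : Ω → ℝ) : Prop := (∀ ω, 0 ≤ p ω) ∧ ∑ ω, p ω = 1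

lemma Pr_nonneg' (p : Ω → ℝ) (hp : ∀ ω, 0 ≤ p ω) (A : Set Ω) : 0 ≤ Pr p A := by
  apply Finset.sum_nonneg; intro ω _
  split <;> simp [hp ω]

lemma Pr_mono' (p : Ω → ℝ) (hp : ∀ ω, 0 ≤ p ω) {A B : Set Ω} (h : A ⊆ B) :
    Pr p A ≤ Pr p B := by
  apply Finset.sum_le_sum; intro ω _
  by_cases hω : ω ∈ A
  · simp [hω, h hω]
  · simp only [hω, if_false]; split <;> simp [hp ω]

lemma Pr_empty' (p : Ω → ℝ) : Pr p (∅ : Set Ω) = 0 := by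
  simp [Pr]

lemma Pr_fiber' {ιU : Type*} (p : Ω → ℝ) (U : Ω → ιU) (S : Set Ω) :
    Pr p S = ∑ u ∈ Finset.univ.image U, Pr p (S ∩ {ω | U ω = u}) := by
  unfold Pr
  rw [← Finset.sum_fiberwise_of_maps_to
      (fun ω _ => Finset.mem_image_of_mem U (Finset.mem_univ ω))]
  refine Finset.sum_congr rfl fun u _ => ?_
  rw [Finset.sum_filter]
  refine Finset.sum_congr rfl fun ω _ => ?_
  by_cases h1 : U ω = u <;> by_cases h2 : ω ∈ S <;>
    simp [h1, h2, Set.mem_inter_iff]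
/-- conditional independence of T and Y(t) given U implies
conditional independence given the propensity score e(U). -/
theorem stmt6 {ιU ιY : Type*} (p : Ω → ℝ) (hp : IsProb p)
    (U : Ω → ιU) (T : Ω → ℝ) (Yt : Ω → ιY)
    (hT : ∀ ω, T ω = 0 ∨ T ω = 1)
    (eU : Ω → ℝ)
    (heU : ∀ ω, eU ω = cPr p {ω' | T ω' = 1} {ω' | U ω' = U ω})
    (hCI : ∀ (y : ιY) (u : ιU), Pr p ({ω | Yt ω = y} ∩ {ω | U ω = u}) > 0 →
      cPr p {ω | T ω = 1} ({ω | Yt ω = y} ∩ {ω | U ω = u}) =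
      cPr p {ω | T ω = 1} {ω | U ω = u}) :
    ∀ (y : ιY) (ρ : ℝ), Pr p ({ω | Yt ω = y} ∩ {ω | eU ω = ρ}) > 0 →
      cPr p {ω | T ω = 1} ({ω | Yt ω = y} ∩ {ω | eU ω = ρ}) = ρ := by
  intro y ρ hpos
  have hp0 := hp.1
  set A : Set Ω := {ω | Yt ω = y} ∩ {ω | eU ω = ρ} with hA
  have key : Pr p ({ω | T ω = 1} ∩ A) = ρ * Pr p A := by
    rw [Pr_fiber' p U ({ω | T ω = 1} ∩ A), Pr_fiber' p U A, Finset.mul_sum]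
    refine Finset.sum_congr rfl fun u _ => ?_
    by_cases he : cPr p {ω' | T ω' = 1} {ω' | U ω' = u} = ρ
    · have hAu : A ∩ {ω | U ω = u} = {ω | Yt ω = y} ∩ {ω | U ω = u} := by
        ext ω
        simp only [hA, Set.mem_inter_iff, Set.mem_setOf_eq]
        constructor
        · rintro ⟨⟨h1, _⟩, h3⟩; exact ⟨h1, h3⟩
        · rintro ⟨h1, h3⟩
          refine ⟨⟨h1, ?_⟩, h3⟩
          rw [heU ω, h3]; exact he
      rw [Set.inter_assoc, hAu]
      set B : Set Ω := {ω | Yt ω = y} ∩ {ω | U ω = u} with hB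
      by_cases hb : Pr p B > 0
      · have := hCI y u hb
        rw [he] at this
        unfold cPr at this
        rw [div_eq_iff (ne_of_gt hb)] at this
        rw [this]
      · have hb0 : Pr p B = 0 :=
          le_antisymm (not_lt.mp hb) (Pr_nonneg' p hp0 B)
        have hle : Pr p ({ω | T ω = 1} ∩ B) ≤ 0 := by
          rw [← hb0]
          exact Pr_mono' p hp0 Set.inter_subset_right
        have := Pr_nonneg' p hp0 ({ω | T ω = 1} ∩ B)
        rw [le_antisymm hle this, hb0, mul_zero]
    · have hempty : A ∩ {ω | U ω = u} = (∅ : Set Ω) := by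
        ext ω
        simp only [hA, Set.mem_inter_iff, Set.mem_setOf_eq, Set.mem_empty_iff_false,
          iff_false, not_and]
        rintro ⟨_, h2⟩ h3
        exact he (by rw [← h3, ← heU ω]; exact h2)
      rw [Set.inter_assoc, hempty, Set.inter_empty, Pr_empty']; ring
  unfold cPr
  rw [key, mul_div_assoc, div_self (ne_of_gt hpos), mul_one]
end
end

section
/- In the two-subpopulation model, with the no-intervention counterfactual outcome Y^d defined at the unit level using fresh noise E' (and fresh treatment draw T' with the same law as T, independent of the factual world), the Layer 3 valuation satisfies P(Y^d = −1 | T = −1) = 13/60. -/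
open scoped Classical
noncomputable section

variable {Ω : Type*} [Fintype Ω]

lemma Pr_union_disjoint (p : Ω → ℝ) (A B : Set Ω) (h : ∀ ω, ¬(ω ∈ A ∧ ω ∈ B)) :
    Pr p (A ∪ B) = Pr p A + Pr p B := by
  unfold Pr
  rw [← Finset.sum_add_distrib]
  refine Finset.sum_congr rfl fun ω _ => ?_
  by_cases hA : ω ∈ A <;> by_cases hB : ω ∈ B <;>
    simp [hA, hB, Set.mem_union] <;> exact absurd ⟨hA, hB⟩ (h ω)

lemma Pr_partition {ι : Type*} [Fintype ι] (p : Ω → ℝ) (U : Ω → ι) (A : Set Ω) :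
    Pr p A = ∑ u, Pr p (A ∩ {ω | U ω = u}) := by
  unfold Pr
  rw [Finset.sum_comm]
  refine Finset.sum_congr rfl fun ω _ => ?_
  simp only [Set.mem_inter_iff, Set.mem_setOf_eq, ite_and]
  by_cases hA : ω ∈ A
  · simp [hA]
  · simp [hA]

lemma Pr_eq_cPr_mul (p : Ω → ℝ) (A B : Set Ω) (h : Pr p B ≠ 0) :
    Pr p (A ∩ B) = cPr p A B * Pr p B := by
  unfold cPr; field_simp

lemma cPr_congr (p : Ω → ℝ) {A A' B : Set Ω} (h : A ∩ B = A' ∩ B) :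
    cPr p A B = cPr p A' B := by unfold cPr; rw [h]

lemma cPr_add (p : Ω → ℝ) (A A₁ A₂ B : Set Ω) (hU : A = A₁ ∪ A₂)
    (hd : ∀ ω, ¬(ω ∈ A₁ ∧ ω ∈ A₂)) :
    cPr p A B = cPr p A₁ B + cPr p A₂ B := by
  unfold cPr
  rw [hU, Set.union_inter_distrib_right,
    Pr_union_disjoint p _ _ (fun ω h => hd ω ⟨h.1.1, h.2.1⟩), add_div]

lemma cPr_compl (p : Ω → ℝ) (A₁ A₂ B : Set Ω) (hcover : A₁ ∪ A₂ = Set.univ)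
    (hd : ∀ ω, ¬(ω ∈ A₁ ∧ ω ∈ A₂)) (hB : Pr p B ≠ 0) :
    cPr p A₁ B = 1 - cPr p A₂ B := by
  have h1 : cPr p Set.univ B = cPr p A₁ B + cPr p A₂ B := by
    rw [← hcover]; exact cPr_add p _ _ _ _ rfl hd
  have h2 : cPr p Set.univ B = 1 := by
    unfold cPr; rw [Set.univ_inter]; field_simp
  linarith

/-- Layer 3 valuation P(Y^d = −1 | T = −1) = 13/60 in the
two-subpopulation model, where Y^d uses a fresh copy (T', E') of (T, E). -/
theorem stmt12 (p : Ω → ℝ) (hp : IsProb p)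
    (U : Ω → Fin 200) (T E T' E' Yd : Ω → ℤ)
    (S : Set (Fin 200)) (hS : S = {u : Fin 200 | (u : ℕ) < 100})
    (hUnif : ∀ u : Fin 200, Pr p {ω | U ω = u} = 1 / 200)
    (hTval : ∀ ω, T ω = -1 ∨ T ω = 1) (hT'val : ∀ ω, T' ω = -1 ∨ T' ω = 1)
    (hEval : ∀ ω, E ω = 0 ∨ E ω = 1) (hE'val : ∀ ω, E' ω = 0 ∨ E' ω = 1)
    -- no-intervention counterfactual outcome, built from the fresh copy (T', E')
    (hYddef : ∀ ω, Yd ω = if U ω ∈ S then 2 * T' ω + E' ω else T' ω + E' ω)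
    -- factual conditional laws
    (hTS : ∀ u ∈ S, cPr p {ω | T ω = -1} {ω | U ω = u} = 1)
    (hES : ∀ u ∈ S, cPr p {ω | E ω = 1} {ω | U ω = u} = 1 / 5)
    (hTS' : ∀ u ∉ S, cPr p {ω | T ω = 1} {ω | U ω = u} = 1 / 2)
    (hES' : ∀ u ∉ S, cPr p {ω | E ω = 1} {ω | U ω = u} = 1 / 2)
    (hTE : ∀ (u : Fin 200) (t e : ℤ),
      cPr p ({ω | T ω = t} ∩ {ω | E ω = e}) {ω | U ω = u} =
      cPr p {ω | T ω = t} {ω | U ω = u} * cPr p {ω | E ω = e} {ω | U ω = u})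
    -- (T', E') has the same conditional law as (T, E)
    (hcopyT : ∀ (u : Fin 200) (t : ℤ),
      cPr p {ω | T' ω = t} {ω | U ω = u} = cPr p {ω | T ω = t} {ω | U ω = u})
    (hcopyE : ∀ (u : Fin 200) (e : ℤ),
      cPr p {ω | E' ω = e} {ω | U ω = u} = cPr p {ω | E ω = e} {ω | U ω = u})
    (hT'E' : ∀ (u : Fin 200) (t e : ℤ),
      cPr p ({ω | T' ω = t} ∩ {ω | E' ω = e}) {ω | U ω = u} =
      cPr p {ω | T' ω = t} {ω | U ω = u} * cPr p {ω | E' ω = e} {ω | U ω = u})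
    -- (T', E') independent of the factual (T, E), given the unit
    (hindep : ∀ (u : Fin 200) (t' e' t e : ℤ),
      cPr p (({ω | T' ω = t'} ∩ {ω | E' ω = e'}) ∩ ({ω | T ω = t} ∩ {ω | E ω = e}))
          {ω | U ω = u} =
      cPr p ({ω | T' ω = t'} ∩ {ω | E' ω = e'}) {ω | U ω = u} *
        cPr p ({ω | T ω = t} ∩ {ω | E ω = e}) {ω | U ω = u}) :
    cPr p {ω | Yd ω = -1} {ω | T ω = -1} = 13 / 60 := by
  have hBne : ∀ u : Fin 200, Pr p {ω | U ω = u} ≠ 0 := by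
    intro u; rw [hUnif u]; norm_num
  -- complement values
  have hTm : ∀ u : Fin 200, cPr p {ω | T ω = -1} {ω | U ω = u} =
      (if u ∈ S then 1 else 1/2 : ℝ) := by
    intro u
    by_cases hu : u ∈ S
    · rw [hTS u hu, if_pos hu]
    · rw [if_neg hu]
      have := cPr_compl p {ω | T ω = -1} {ω | T ω = 1} {ω | U ω = u}
        (by ext ω; simp [Set.mem_setOf_eq]; have := hTval ω; tauto)
        (by intro ω ⟨h1, h2⟩; simp only [Set.mem_setOf_eq] at h1 h2; omega) (hBne u)
      rw [this, hTS' u hu]; norm_num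
  have hE1 : ∀ u : Fin 200, cPr p {ω | E ω = 1} {ω | U ω = u} =
      (if u ∈ S then 1/5 else 1/2 : ℝ) := by
    intro u
    by_cases hu : u ∈ S
    · rw [hES u hu, if_pos hu]
    · rw [hES' u hu, if_neg hu]
  have hE0 : ∀ u : Fin 200, cPr p {ω | E ω = 0} {ω | U ω = u} =
      (if u ∈ S then 4/5 else 1/2 : ℝ) := by
    intro u
    have := cPr_compl p {ω | E ω = 0} {ω | E ω = 1} {ω | U ω = u}
      (by ext ω; simp [Set.mem_setOf_eq]; have := hEval ω; tauto)
      (by intro ω ⟨h1, h2⟩; simp only [Set.mem_setOf_eq] at h1 h2; omega) (hBne u)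
    rw [this, hE1 u]
    by_cases hu : u ∈ S <;> simp [hu] <;> norm_num
  -- joint factorization: for any t' e',
  -- cPr (({T'=t'}∩{E'=e'}) ∩ {T=-1}) = cPr ({T'=t'}∩{E'=e'}) * cPr {T=-1}
  have hfact : ∀ (u : Fin 200) (t' e' : ℤ),
      cPr p (({ω | T' ω = t'} ∩ {ω | E' ω = e'}) ∩ {ω | T ω = -1}) {ω | U ω = u} =
      cPr p ({ω | T' ω = t'} ∩ {ω | E' ω = e'}) {ω | U ω = u} *
        cPr p {ω | T ω = -1} {ω | U ω = u} := by
    intro u t' e'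
    have hsplitT : cPr p {ω | T ω = -1} {ω | U ω = u} =
        cPr p ({ω | T ω = -1} ∩ {ω | E ω = 0}) {ω | U ω = u} +
        cPr p ({ω | T ω = -1} ∩ {ω | E ω = 1}) {ω | U ω = u} := by
      apply cPr_add
      · ext ω; simp only [Set.mem_union, Set.mem_inter_iff, Set.mem_setOf_eq]
        have := hEval ω; tauto
      · intro ω ⟨⟨_, h1⟩, ⟨_, h2⟩⟩; simp only [Set.mem_setOf_eq] at h1 h2; omega
    have hsplit : cPr p (({ω | T' ω = t'} ∩ {ω | E' ω = e'}) ∩ {ω | T ω = -1})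
        {ω | U ω = u} =
        cPr p (({ω | T' ω = t'} ∩ {ω | E' ω = e'}) ∩ ({ω | T ω = -1} ∩ {ω | E ω = 0}))
          {ω | U ω = u} +
        cPr p (({ω | T' ω = t'} ∩ {ω | E' ω = e'}) ∩ ({ω | T ω = -1} ∩ {ω | E ω = 1}))
          {ω | U ω = u} := by
      apply cPr_add
      · ext ω; simp only [Set.mem_union, Set.mem_inter_iff, Set.mem_setOf_eq]
        have := hEval ω; tauto
      · intro ω ⟨⟨_, _, h1⟩, ⟨_, _, h2⟩⟩; simp only [Set.mem_setOf_eq] at h1 h2; omega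
    rw [hsplit, hindep u t' e' (-1) 0, hindep u t' e' (-1) 1, hsplitT]
    ring
  -- the per-unit numerator value
  have hNum : ∀ u : Fin 200,
      cPr p ({ω | Yd ω = -1} ∩ {ω | T ω = -1}) {ω | U ω = u} =
      (if u ∈ S then 1/5 else 1/8 : ℝ) := by
    intro u
    by_cases hu : u ∈ S
    · have hset : ({ω | Yd ω = -1} ∩ {ω | T ω = -1}) ∩ {ω | U ω = u} =
          (({ω | T' ω = -1} ∩ {ω | E' ω = 1}) ∩ {ω | T ω = -1}) ∩ {ω | U ω = u} := by
        ext ω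
        by_cases hω : U ω = u
        · have hkey : Yd ω = -1 ↔ (T' ω = -1 ∧ E' ω = 1) := by
            rw [hYddef ω, hω, if_pos hu]
            have := hT'val ω; have := hE'val ω; omega
          simp only [Set.mem_inter_iff, Set.mem_setOf_eq, hω, hkey]
        · simp [Set.mem_inter_iff, Set.mem_setOf_eq, hω]
      rw [cPr_congr p hset, hfact u (-1) 1, hT'E' u (-1) 1, hcopyT u (-1),
        hcopyE u 1, hTm u, hE1 u, if_pos hu, if_pos hu, if_pos hu]
      norm_num
    · have hset : ({ω | Yd ω = -1} ∩ {ω | T ω = -1}) ∩ {ω | U ω = u} =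
          (({ω | T' ω = -1} ∩ {ω | E' ω = 0}) ∩ {ω | T ω = -1}) ∩ {ω | U ω = u} := by
        ext ω
        by_cases hω : U ω = u
        · have hkey : Yd ω = -1 ↔ (T' ω = -1 ∧ E' ω = 0) := by
            rw [hYddef ω, hω, if_neg hu]
            have := hT'val ω; have := hE'val ω; omega
          simp only [Set.mem_inter_iff, Set.mem_setOf_eq, hω, hkey]
        · simp [Set.mem_inter_iff, Set.mem_setOf_eq, hω]
      rw [cPr_congr p hset, hfact u (-1) 0, hT'E' u (-1) 0, hcopyT u (-1),
        hcopyE u 0, hTm u, hE0 u, if_neg hu, if_neg hu, if_neg hu]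
      norm_num
  -- cardinality
  have hcard : (Finset.univ.filter (fun u : Fin 200 => u ∈ S)).card = 100 := by
    simp only [hS, Set.mem_setOf_eq]
    rfl
  -- total probabilities
  have sum_eval : ∀ a b : ℝ,
      (∑ u : Fin 200, (if u ∈ S then a else b)) = 100 * a + 100 * b := by
    intro a b
    rw [Finset.sum_ite, Finset.sum_const, Finset.sum_const, hcard]
    have hcard' : (Finset.univ.filter (fun u : Fin 200 => ¬ u ∈ S)).card = 100 := by
      have := Finset.card_filter_add_card_filter_not
        (s := (Finset.univ : Finset (Fin 200))) (p := fun u => u ∈ S)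
      simp only [Finset.card_univ, Fintype.card_fin] at this
      omega
    rw [hcard']
    push_cast
    ring
  have hNumTot : Pr p ({ω | Yd ω = -1} ∩ {ω | T ω = -1}) = 13/80 := by
    rw [Pr_partition p U]
    have : ∀ u : Fin 200, Pr p (({ω | Yd ω = -1} ∩ {ω | T ω = -1}) ∩ {ω | U ω = u}) =
        (if u ∈ S then (1/5 : ℝ) else 1/8) * (1/200) := by
      intro u
      rw [Pr_eq_cPr_mul p _ _ (hBne u), hNum u, hUnif u]
    rw [Finset.sum_congr rfl fun u _ => this u, ← Finset.sum_mul, sum_eval]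
    norm_num
  have hDenTot : Pr p {ω | T ω = -1} = 3/4 := by
    rw [Pr_partition p U]
    have : ∀ u : Fin 200, Pr p ({ω | T ω = -1} ∩ {ω | U ω = u}) =
        (if u ∈ S then (1 : ℝ) else 1/2) * (1/200) := by
      intro u
      rw [Pr_eq_cPr_mul p _ _ (hBne u), hTm u, hUnif u]
    rw [Finset.sum_congr rfl fun u _ => this u, ← Finset.sum_mul, sum_eval]
    norm_num
  unfold cPr
  rw [hNumTot, hDenTot]
  norm_num
end
end
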